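/- (Preference property of greedy selection) Fix a finite multiset D over 𝒵, and suppose that for every finite multiset T over 𝒵 a strict total order <_T is given on 𝒵 ∪ {Stop}. Define the greedy map c by: starting from T = ∅, while there exists an element z of D \ T with Stop <_T z, append to T the <_T-maximal element of D \ T; return c(D) = T at termination. Then for every multiset S with c(D) ⊆ S ⊆ D (as multisets), the greedy map applied to S returns the same output: c(S) = c(D). -/

import Mathlib

/-- One run of the greedy selection meta-algorithm: `GreedyRun lt D T T'` means that,
starting from the current training multiset `T`, the greedy loop on dataset `D`
terminates with output `T'`.  Here `lt T a b` is the strict total order `<_T` on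
`𝒵 ∪ {Stop}` (with `none` playing the role of `Stop`): while some element `z` of the
multiset difference `D - T` satisfies `Stop <_T z`, the `<_T`-maximal element of `D - T`
is added to `T`. -/
inductive GreedyRun {𝒵 : Type*} [DecidableEq 𝒵] (lt : Multiset 𝒵 → Option 𝒵 → Option 𝒵 → Prop)
    (D : Multiset 𝒵) : Multiset 𝒵 → Multiset 𝒵 → Prop
  | done (T : Multiset 𝒵) (hstop : ∀ z ∈ D - T, ¬ lt T none (some z)) :
      GreedyRun lt D T T
  | step (T : Multiset 𝒵) (z : 𝒵) (T' : Multiset 𝒵)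
      (hcond : ∃ y ∈ D - T, lt T none (some y))
      (hmem : z ∈ D - T)
      (hmax : ∀ y ∈ D - T, y ≠ z → lt T (some y) (some z))
      (hrest : GreedyRun lt D (z ::ₘ T) T') :
      GreedyRun lt D T T'

/-!
Every element the greedy run on `D` selects also lies in `S`, and at that moment it is the
`<_T`-maximum of `D \ T ⊇ S \ T`, hence also of `S \ T`; it beats `Stop` by transitivity through
any witness of the loop condition. When the run on `D` stops, no element of
`S \ T ⊆ D \ T` beats `Stop` either. So the run on `S` makes the same choices and stops at the
same point.
-/

theorem Multiset.mem_sub_of_cons_le {α : Type*} [DecidableEq α] {S T : Multiset α} {z : α}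
    (h : z ::ₘ T ≤ S) : z ∈ S - T := by
  rw [Multiset.mem_sub]
  simpa only [Multiset.count_cons_self, Nat.succ_le_iff] using Multiset.count_le_of_le z h

namespace GreedyRun

variable {𝒵 : Type*} [DecidableEq 𝒵] {lt : Multiset 𝒵 → Option 𝒵 → Option 𝒵 → Prop}

theorem start_le {D U T : Multiset 𝒵} (h : GreedyRun lt D U T) : U ≤ T := by
  induction h with
  | done T _ => exact le_rfl
  | step T z _ _ _ _ _ ih => exact (Multiset.le_cons_self T z).trans ih

theorem stop_lt_of_isMax (htrans : ∀ T a b c, lt T a b → lt T b c → lt T a c)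
    {D T : Multiset 𝒵} {z : 𝒵} (hcond : ∃ y ∈ D - T, lt T none (some y))
    (hmax : ∀ y ∈ D - T, y ≠ z → lt T (some y) (some z)) :
    lt T none (some z) := by
  obtain ⟨y, hy, hstop_y⟩ := hcond
  by_cases hyz : y = z
  · exact hyz ▸ hstop_y
  · exact htrans T none (some y) (some z) hstop_y (hmax y hy hyz)

theorem restrict_dataset (htrans : ∀ T a b c, lt T a b → lt T b c → lt T a c)
    {D S U T : Multiset 𝒵} (hrun : GreedyRun lt D U T) (hTS : T ≤ S) (hSD : S ≤ D) :
    GreedyRun lt S U T := by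
  have hsub : ∀ V, S - V ≤ D - V := fun V => tsub_le_tsub_right hSD V
  induction hrun with
  | done T hstop =>
      exact done T fun z hz => hstop z (Multiset.mem_of_le (hsub T) hz)
  | step T z T' hcond _ hmax hrest ih =>
      have hzS : z ∈ S - T := Multiset.mem_sub_of_cons_le (hrest.start_le.trans hTS)
      exact step T z T' ⟨z, hzS, stop_lt_of_isMax htrans hcond hmax⟩ hzS
        (fun y hy => hmax y (Multiset.mem_of_le (hsub T) hy)) (ih hTS)

end GreedyRun

theorem greedy_preference_general {𝒵 : Type*} [DecidableEq 𝒵]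
    (lt : Multiset 𝒵 → Option 𝒵 → Option 𝒵 → Prop)
    (htrans : ∀ (T : Multiset 𝒵) (a b c : Option 𝒵), lt T a b → lt T b c → lt T a c)
    (D S T : Multiset 𝒵)
    (hrun : GreedyRun lt D 0 T)
    (hTS : T ≤ S) (hSD : S ≤ D) :
    GreedyRun lt S 0 T :=
  hrun.restrict_dataset htrans hTS hSD

/-- Preference property of greedy selection: if the greedy run on `D` (started from the
empty multiset) outputs `c(D) = T`, then for every multiset `S` with `c(D) ⊆ S ⊆ D`
(multiset inclusion) the greedy run on `S` outputs the same `T`, i.e. `c(S) = c(D)`. -/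
theorem greedy_preference {𝒵 : Type*} [DecidableEq 𝒵]
    (lt : Multiset 𝒵 → Option 𝒵 → Option 𝒵 → Prop)
    (hirrefl : ∀ (T : Multiset 𝒵) (a : Option 𝒵), ¬ lt T a a)
    (htrans : ∀ (T : Multiset 𝒵) (a b c : Option 𝒵), lt T a b → lt T b c → lt T a c)
    (htrichot : ∀ (T : Multiset 𝒵) (a b : Option 𝒵), lt T a b ∨ a = b ∨ lt T b a)
    (D S T : Multiset 𝒵)
    (hrun : GreedyRun lt D 0 T)
    (hTS : T ≤ S) (hSD : S ≤ D) :
    GreedyRun lt S 0 T :=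
  greedy_preference_general lt htrans D S T hrun hTS hSD
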